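/- arXiv:1708.07451 — 2 statements merged into one kernel-verified Lean document; each statement's English description precedes it below -/
import Mathlib

section
/- There exists a numerical constant C > 0 such that for every nonzero s-sparse vector x_0 ∈ ℝ^n (with 1 ≤ s ≤ n) and every nonzero μ ∈ ℝ^M, defining K := {X ∈ ℝ^{n×M} : ‖X‖_{1,2} ≤ ‖x_0·μᵀ‖_{1,2}}, the conic mean width satisfies w₁(cone(K, x_0·μᵀ))² ≤ C · s · max{M, log(2n/s)}. -/
open MeasureTheory ProbabilityTheory

noncomputable section

/-- Euclidean inner product on `ι → ℝ`. -/
def dotp {ι : Type*} [Fintype ι] (x y : ι → ℝ) : ℝ := ∑ i, x i * y i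

/-- Euclidean norm on `ι → ℝ`. -/
def enorm2 {ι : Type*} [Fintype ι] (x : ι → ℝ) : ℝ := Real.sqrt (∑ i, (x i) ^ 2)

/-- ℓ¹ norm on `ι → ℝ`. -/
def l1norm {ι : Type*} [Fintype ι] (x : ι → ℝ) : ℝ := ∑ i, |x i|

/-- ℓ_{1,2} norm of a matrix, given as a function on pairs (row, column). -/
def l12norm {n M : ℕ} (X : Fin n × Fin M → ℝ) : ℝ :=
  ∑ l : Fin n, Real.sqrt (∑ j : Fin M, (X (l, j)) ^ 2)

/-- The sub-Gaussian norm `‖X‖_{ψ₂} = sup_{p ≥ 1} p^{-1/2} (E|X|^p)^{1/p}`. -/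
def sgNorm {Ω : Type*} [MeasurableSpace Ω] (P : Measure Ω) (X : Ω → ℝ) : ℝ :=
  ⨆ p : {p : ℝ // 1 ≤ p}, p.1 ^ (-(2:ℝ)⁻¹) * (∫ ω, |X ω| ^ p.1 ∂P) ^ p.1⁻¹

/-- `X` is sub-Gaussian: the family defining the ψ₂-norm is bounded above. -/
def IsSubG {Ω : Type*} [MeasurableSpace Ω] (P : Measure Ω) (X : Ω → ℝ) : Prop :=
  BddAbove (Set.range fun p : {p : ℝ // 1 ≤ p} =>
    p.1 ^ (-(2:ℝ)⁻¹) * (∫ ω, |X ω| ^ p.1 ∂P) ^ p.1⁻¹)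

/-- The sub-Gaussian norm of a random vector, `sup_{‖x‖₂ = 1} ‖⟨a, x⟩‖_{ψ₂}`. -/
def sgNormVec {Ω ι : Type*} [MeasurableSpace Ω] [Fintype ι] (P : Measure Ω)
    (a : Ω → ι → ℝ) : ℝ :=
  ⨆ x : {x : ι → ℝ // enorm2 x = 1}, sgNorm P fun ω => dotp (a ω) x.1

/-- A random vector is isotropic if `E[a aᵀ] = Id`. -/
def Isotropic {Ω ι : Type*} [MeasurableSpace Ω] [Fintype ι] [DecidableEq ι]
    (P : Measure Ω) (a : Ω → ι → ℝ) : Prop :=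
  ∀ k l, ∫ ω, a ω k * a ω l ∂P = if k = l then 1 else 0

/-- The standard Gaussian measure `N(0, Id)` on `ι → ℝ`. -/
def stdGaussian (ι : Type*) [Fintype ι] : Measure (ι → ℝ) :=
  Measure.pi fun _ => gaussianReal 0 1

/-- Gaussian mean width `w(L) = E[sup_{h ∈ L} ⟨g, h⟩]`. -/
def meanWidth {ι : Type*} [Fintype ι] (L : Set (ι → ℝ)) : ℝ :=
  ∫ g, sSup ((fun h => dotp g h) '' L) ∂(stdGaussian ι)

/-- The cone of `L` at `x`. -/
def coneAt {ι : Type*} [Fintype ι] (L : Set (ι → ℝ)) (x : ι → ℝ) : Set (ι → ℝ) :=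
  {v | ∃ c : ℝ, 0 ≤ c ∧ ∃ h ∈ L, v = c • (h - x)}

/-- The Euclidean sphere of radius `t`. -/
def sphR (ι : Type*) [Fintype ι] (t : ℝ) : Set (ι → ℝ) := {x | enorm2 x = t}

/-- Conic mean width `w₁(cone(L, x)) = w(cone(L,x) ∩ S^{d-1})`. -/
def conicWidth {ι : Type*} [Fintype ι] (L : Set (ι → ℝ)) (x : ι → ℝ) : ℝ :=
  meanWidth (coneAt L x ∩ sphR ι 1)

/-- Local mean width at scale `t`: `w_t(L) = w(L ∩ t S^{d-1})`. -/
def localWidth {ι : Type*} [Fintype ι] (L : Set (ι → ℝ)) (t : ℝ) : ℝ :=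
  meanWidth (L ∩ sphR ι t)

end

/-!
If `v` satisfies `⟨v, Y⟩ ≤ ⟨v, X⟩` on the ball `{‖Y‖_{1,2} ≤ ‖X‖_{1,2}}`, then `⟨v, y⟩ ≤ 0` on the
descent cone, so `⟨g, y⟩ ≤ ⟨g - v, y⟩ ≤ ‖g - v‖` for unit `y`; hence the conic width is at most
`E ‖g - v(g)‖` for any choice of such a certificate `v(g)`. We take `v(g)` equal to
`λ X_l / ‖X_l‖` on the (at most `s`) nonzero rows of `X` and to the projection of `g_l` onto the
`λ`-ball on the zero rows. A nonzero row contributes `E ‖g_l - v_l‖² ≤ 2M + 2λ²`, a zero row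
`E (‖g_l‖ - λ)₊² ≤ 8 e^{-λ²/8} E e^{‖g_l‖²/4} = 8 e^{-λ²/8} (√2)^M`. With
`λ² = 8 (log (2n/s) + M)` the zero rows contribute `O(s)` in total, and Jensen's inequality
`(E ‖g - v‖)² ≤ E ‖g - v‖²` gives the bound.
-/

open Real Finset Function

section GaussianMoments

lemma integral_sq_gaussianReal : ∫ x, x ^ 2 ∂gaussianReal 0 1 = 1 := by
  simpa [variance_eq_integral measurable_id'.aemeasurable] using
    variance_fun_id_gaussianReal (μ := 0) (v := 1)

lemma integral_exp_sq_div_four_gaussianReal : ∫ x, exp (x ^ 2 / 4) ∂gaussianReal 0 1 = √2 := by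
  have hpdf (x : ℝ) : gaussianPDFReal 0 1 x • exp (x ^ 2 / 4)
      = (√(2 * π))⁻¹ * exp (-4⁻¹ * x ^ 2) := by
    rw [gaussianPDFReal, smul_eq_mul, mul_assoc, ← exp_add]
    simp only [NNReal.coe_one, mul_one, sub_zero]
    ring_nf
  rw [integral_gaussianReal_eq_integral_smul one_ne_zero]
  simp_rw [hpdf]
  rw [integral_const_mul, integral_gaussian, show π / 4⁻¹ = 2 * (2 * π) by ring,
    sqrt_mul zero_le_two (2 * π), mul_comm √2, inv_mul_cancel_left₀ (by positivity)]

lemma integrable_exp_sq_div_four_gaussianReal :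
    Integrable (fun x ↦ exp (x ^ 2 / 4)) (gaussianReal 0 1) :=
  .of_integral_ne_zero (by rw [integral_exp_sq_div_four_gaussianReal]; positivity)

end GaussianMoments

section StdGaussian

variable {ι : Type*} [Fintype ι]

instance : IsProbabilityMeasure (stdGaussian ι) := by
  unfold _root_.stdGaussian; infer_instance

lemma integral_comp_eval_stdGaussian (i : ι) {f : ℝ → ℝ} (hf : Continuous f) :
    ∫ g, f (g i) ∂stdGaussian ι = ∫ x, f x ∂gaussianReal 0 1 := by
  rw [← (measurePreserving_eval (fun _ : ι ↦ gaussianReal 0 1) i).map_eq,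
    integral_map (measurable_pi_apply i).aemeasurable hf.aestronglyMeasurable]
  rfl

lemma integrable_comp_eval_stdGaussian (i : ι) {f : ℝ → ℝ}
    (hf : Integrable f (gaussianReal 0 1)) : Integrable (fun g ↦ f (g i)) (stdGaussian ι) :=
  integrable_comp_eval hf

lemma integrable_eval_stdGaussian (i : ι) : Integrable (fun g ↦ g i) (stdGaussian ι) :=
  integrable_comp_eval_stdGaussian i ((memLp_id_gaussianReal 1).integrable le_rfl)

lemma integrable_dotp_stdGaussian (e : ι → ℝ) : Integrable (fun g ↦ dotp g e) (stdGaussian ι) :=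
  integrable_finsetSum _ fun i _ ↦ (integrable_eval_stdGaussian i).mul_const _

lemma integral_dotp_stdGaussian (e : ι → ℝ) : ∫ g, dotp g e ∂stdGaussian ι = 0 := by
  simp only [dotp]
  rw [integral_finsetSum _ fun i _ ↦ (integrable_eval_stdGaussian i).mul_const _]
  refine sum_eq_zero fun i _ ↦ ?_
  rw [integral_mul_const, integral_comp_eval_stdGaussian i (f := fun x ↦ x) continuous_id,
    integral_id_gaussianReal, zero_mul]

lemma integrable_sq_eval_stdGaussian (i : ι) : Integrable (fun g ↦ g i ^ 2) (stdGaussian ι) :=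
  integrable_comp_eval_stdGaussian i (f := fun x ↦ x ^ 2) (memLp_id_gaussianReal 2).integrable_sq

lemma integrable_sum_sq_stdGaussian (s : Finset ι) :
    Integrable (fun g ↦ ∑ i ∈ s, g i ^ 2) (stdGaussian ι) :=
  integrable_finsetSum _ fun i _ ↦ integrable_sq_eval_stdGaussian i

lemma integral_sum_sq_stdGaussian (s : Finset ι) :
    ∫ g, ∑ i ∈ s, g i ^ 2 ∂stdGaussian ι = #s := by
  rw [integral_finsetSum _ fun i _ ↦ integrable_sq_eval_stdGaussian i]
  simp [integral_comp_eval_stdGaussian _ (continuous_pow 2), integral_sq_gaussianReal]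

lemma exp_sum_sq_div_four_eq_prod [DecidableEq ι] (s : Finset ι) (g : ι → ℝ) :
    exp ((∑ i ∈ s, g i ^ 2) / 4) = ∏ i, (if i ∈ s then exp (g i ^ 2 / 4) else 1) := by
  rw [prod_ite_mem_eq, sum_div, exp_sum]

lemma integrable_exp_sum_sq_div_four_stdGaussian (s : Finset ι) :
    Integrable (fun g ↦ exp ((∑ i ∈ s, g i ^ 2) / 4)) (stdGaussian ι) := by
  classical
  simp_rw [exp_sum_sq_div_four_eq_prod]
  refine Integrable.fintype_prod (f := fun i x ↦ if i ∈ s then exp (x ^ 2 / 4) else 1)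
    fun i ↦ ?_
  split_ifs
  · exact integrable_exp_sq_div_four_gaussianReal
  · exact integrable_const 1

lemma integral_exp_sum_sq_div_four_stdGaussian (s : Finset ι) :
    ∫ g, exp ((∑ i ∈ s, g i ^ 2) / 4) ∂stdGaussian ι = √2 ^ #s := by
  classical
  simp_rw [exp_sum_sq_div_four_eq_prod]
  rw [_root_.stdGaussian, integral_fintype_prod_eq_prod
    (f := fun i x ↦ if i ∈ s then exp (x ^ 2 / 4) else 1)]
  have hcoord (i : ι) : ∫ x, (if i ∈ s then exp (x ^ 2 / 4) else 1) ∂gaussianReal 0 1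
      = if i ∈ s then √2 else 1 := by
    split_ifs <;> simp [integral_exp_sq_div_four_gaussianReal]
  simp only [hcoord, prod_ite_mem_eq, prod_const]

end StdGaussian

section EuclideanNorm

variable {ι : Type*} [Fintype ι]

lemma enorm2_eq_norm (x : ι → ℝ) : enorm2 x = ‖(WithLp.toLp 2 x : EuclideanSpace ℝ ι)‖ := by
  simp [enorm2, EuclideanSpace.norm_eq]

lemma enorm2_nonneg (x : ι → ℝ) : 0 ≤ enorm2 x := sqrt_nonneg _

lemma enorm2_sq (x : ι → ℝ) : enorm2 x ^ 2 = ∑ i, x i ^ 2 :=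
  sq_sqrt (sum_nonneg fun _ _ ↦ sq_nonneg _)

lemma enorm2_smul (c : ℝ) (x : ι → ℝ) : enorm2 (c • x) = |c| * enorm2 x := by
  rw [enorm2_eq_norm, enorm2_eq_norm, WithLp.toLp_smul, norm_smul, Real.norm_eq_abs]

lemma enorm2_sub_le (x y : ι → ℝ) : enorm2 (x - y) ≤ enorm2 x + enorm2 y := by
  simpa only [enorm2_eq_norm, WithLp.toLp_sub] using norm_sub_le _ _

lemma enorm2_eq_zero {x : ι → ℝ} : enorm2 x = 0 ↔ x = 0 := by
  rw [enorm2_eq_norm, norm_eq_zero, WithLp.toLp_eq_zero]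

lemma dotp_le_enorm2_mul_enorm2 (x y : ι → ℝ) : dotp x y ≤ enorm2 x * enorm2 y :=
  Real.sum_mul_le_sqrt_mul_sqrt _ _ _

lemma dotp_smul_left (c : ℝ) (x y : ι → ℝ) : dotp (c • x) y = c * dotp x y := by
  simp [dotp, mul_sum, mul_assoc]

lemma dotp_self (x : ι → ℝ) : dotp x x = enorm2 x ^ 2 := by
  rw [enorm2_sq, dotp]
  simp only [sq]

end EuclideanNorm

section Sqrt

variable {α : Type*} [MeasurableSpace α] {P : Measure α} {F : α → ℝ}

lemma MeasureTheory.Integrable.sqrt_of_nonneg [IsFiniteMeasure P] (hF0 : ∀ a, 0 ≤ F a)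
    (hF : Integrable F P) : Integrable (fun a ↦ √(F a)) P := by
  refine (integrable_const 1 |>.add hF).mono' (continuous_sqrt.comp_aestronglyMeasurable hF.1)
    (ae_of_all _ fun a ↦ ?_)
  rw [Real.norm_eq_abs, abs_of_nonneg (sqrt_nonneg _)]
  change √(F a) ≤ 1 + F a
  nlinarith [sq_sqrt (hF0 a), sqrt_nonneg (F a)]

lemma integral_sqrt_le_sqrt_integral [IsProbabilityMeasure P] (hF0 : ∀ a, 0 ≤ F a)
    (hF : Integrable F P) : ∫ a, √(F a) ∂P ≤ √(∫ a, F a ∂P) :=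
  strictConcaveOn_sqrt.concaveOn.le_map_integral continuous_sqrt.continuousOn isClosed_Ici
    (ae_of_all _ hF0) hF (hF.sqrt_of_nonneg hF0)

end Sqrt

section MeanWidth

variable {ι : Type*} [Fintype ι]

lemma dotp_le_enorm2_sub_of_mem_coneAt {L : Set (ι → ℝ)} {x v y : ι → ℝ}
    (hv : ∀ Y ∈ L, dotp v Y ≤ dotp v x) (hy : y ∈ coneAt L x ∩ sphR ι 1) (g : ι → ℝ) :
    dotp g y ≤ enorm2 (g - v) := by
  obtain ⟨⟨c, hc, Y, hY, rfl⟩, hy1⟩ := hy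
  have hsplit :
      dotp g (c • (Y - x)) = dotp (g - v) (c • (Y - x)) + c * (dotp v Y - dotp v x) := by
    simp only [dotp, Pi.sub_apply, Pi.smul_apply, smul_eq_mul, mul_sub, ← sum_sub_distrib,
      mul_sum, ← sum_add_distrib]
    exact sum_congr rfl fun i _ ↦ by ring
  calc dotp g (c • (Y - x)) ≤ enorm2 (g - v) * 1 + c * 0 := by
        rw [hsplit, ← show enorm2 (c • (Y - x)) = 1 from hy1]
        gcongr
        · exact dotp_le_enorm2_mul_enorm2 _ _
        · linarith [hv Y hY]
    _ = enorm2 (g - v) := by ring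

lemma meanWidth_sq_le {D : Set (ι → ℝ)} {e : ι → ℝ} (he : e ∈ D) {F : (ι → ℝ) → ℝ}
    (hF0 : ∀ g, 0 ≤ F g) (hF : Integrable F (stdGaussian ι))
    (hD : ∀ g, ∀ y ∈ D, dotp g y ≤ √(F g)) :
    meanWidth D ^ 2 ≤ ∫ g, F g ∂stdGaussian ι := by
  have hsup_le (g : ι → ℝ) : sSup ((fun h ↦ dotp g h) '' D) ≤ √(F g) :=
    Real.sSup_le (by rintro _ ⟨y, hy, rfl⟩; exact hD g y hy) (sqrt_nonneg _)
  have hle_sup (g : ι → ℝ) : dotp g e ≤ sSup ((fun h ↦ dotp g h) '' D) :=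
    le_csSup ⟨√(F g), by rintro _ ⟨y, hy, rfl⟩; exact hD g y hy⟩ ⟨e, he, rfl⟩
  by_cases hint : Integrable (fun g ↦ sSup ((fun h ↦ dotp g h) '' D)) (stdGaussian ι)
  · have hnonneg : 0 ≤ meanWidth D := (integral_dotp_stdGaussian e).symm.le.trans
      (integral_mono (integrable_dotp_stdGaussian e) hint hle_sup)
    calc meanWidth D ^ 2 ≤ √(∫ g, F g ∂stdGaussian ι) ^ 2 :=
          pow_le_pow_left₀ hnonneg ((integral_mono hint (hF.sqrt_of_nonneg hF0) hsup_le).trans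
            (integral_sqrt_le_sqrt_integral hF0 hF)) 2
      _ = ∫ g, F g ∂stdGaussian ι := sq_sqrt (integral_nonneg hF0)
  · rw [meanWidth, integral_undef hint, sq, zero_mul]
    exact integral_nonneg hF0

end MeanWidth

section Clip

variable {lam r : ℝ}

/-- `clipFactor lam r • u` is the projection of a vector `u` of norm `r` onto the ball of
radius `lam`. -/
noncomputable def clipFactor (lam r : ℝ) : ℝ := min 1 (lam / r)

lemma clipFactor_nonneg (hlam : 0 ≤ lam) (hr : 0 ≤ r) : 0 ≤ clipFactor lam r :=
  le_min zero_le_one (div_nonneg hlam hr)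

lemma clipFactor_le_one : clipFactor lam r ≤ 1 := min_le_left _ _

lemma clipFactor_mul_le (hlam : 0 ≤ lam) (hr : 0 ≤ r) : clipFactor lam r * r ≤ lam := by
  rcases hr.eq_or_lt with rfl | hr
  · simpa using hlam
  · exact (mul_le_mul_of_nonneg_right (min_le_right _ _) hr.le).trans_eq
      (div_mul_cancel₀ _ hr.ne')

lemma sq_one_sub_clipFactor_mul_le (hlam : 0 ≤ lam) (hr : 0 ≤ r) :
    ((1 - clipFactor lam r) * r) ^ 2 ≤ 8 * exp (r ^ 2 / 4 - lam ^ 2 / 8) := by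
  by_cases hrl : r ≤ lam
  · have hzero : (1 - clipFactor lam r) * r = 0 := by
      rcases hr.eq_or_lt with rfl | hr
      · rw [mul_zero]
      · rw [clipFactor, min_eq_left ((one_le_div hr).2 hrl), sub_self, zero_mul]
    rw [hzero, zero_pow two_ne_zero]
    positivity
  · have hres : ((1 - clipFactor lam r) * r) ^ 2 ≤ r ^ 2 := by
      have h0 := clipFactor_nonneg hlam hr
      have h1 : clipFactor lam r ≤ 1 := clipFactor_le_one
      exact pow_le_pow_left₀ (mul_nonneg (by linarith) hr) (by nlinarith) 2
    -- `r ^ 2 ≤ 8 exp (r ^ 2 / 8)`, and `exp ((r ^ 2 - lam ^ 2) / 8) ≥ 1` as `r > lam`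
    have hexp : exp (r ^ 2 / 8) ≤ exp (r ^ 2 / 4 - lam ^ 2 / 8) :=
      exp_le_exp.2 (by nlinarith [not_le.1 hrl])
    linarith [add_one_le_exp (r ^ 2 / 8)]

end Clip

section L12Certificate

variable {n M : ℕ}

lemma l12norm_eq_sum_enorm2_curry (X : Fin n × Fin M → ℝ) :
    l12norm X = ∑ l, enorm2 (curry X l) := rfl

lemma dotp_eq_sum_dotp_curry (v Y : Fin n × Fin M → ℝ) :
    dotp v Y = ∑ l, dotp (curry v l) (curry Y l) :=
  Fintype.sum_prod_type _

lemma enorm2_sq_eq_sum_enorm2_curry_sq (Z : Fin n × Fin M → ℝ) :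
    enorm2 Z ^ 2 = ∑ l, enorm2 (curry Z l) ^ 2 := by
  simp only [enorm2_sq]
  exact Fintype.sum_prod_type _

lemma dotp_le_mul_l12norm {v : Fin n × Fin M → ℝ} {lam : ℝ} (hv : ∀ l, enorm2 (curry v l) ≤ lam)
    (Y : Fin n × Fin M → ℝ) : dotp v Y ≤ lam * l12norm Y := by
  rw [dotp_eq_sum_dotp_curry, l12norm_eq_sum_enorm2_curry, mul_sum]
  exact sum_le_sum fun l _ ↦ (dotp_le_enorm2_mul_enorm2 _ _).trans
    (mul_le_mul_of_nonneg_right (hv l) (enorm2_nonneg _))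

noncomputable def rowSupport (X : Fin n × Fin M → ℝ) : Finset (Fin n) :=
  univ.filter fun l ↦ enorm2 (curry X l) ≠ 0

/-- A subgradient of `lam • l12norm` at `X` chosen close to `g`: on the nonzero rows of `X` it is
forced to be `lam • X_l / ‖X_l‖`, on the zero rows it is the projection of `g_l` onto the
`lam`-ball. -/
noncomputable def l12Certificate (lam : ℝ) (X g : Fin n × Fin M → ℝ) : Fin n × Fin M → ℝ :=
  fun p ↦ if enorm2 (curry X p.1) = 0 then clipFactor lam (enorm2 (curry g p.1)) * g p
    else lam / enorm2 (curry X p.1) * X p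

variable {lam : ℝ} {X g : Fin n × Fin M → ℝ} {l : Fin n}

lemma curry_l12Certificate_of_eq_zero (hl : enorm2 (curry X l) = 0) :
    curry (l12Certificate lam X g) l = clipFactor lam (enorm2 (curry g l)) • curry g l := by
  ext j
  simp [l12Certificate, hl]

lemma curry_l12Certificate_of_ne_zero (hl : enorm2 (curry X l) ≠ 0) :
    curry (l12Certificate lam X g) l = (lam / enorm2 (curry X l)) • curry X l := by
  ext j
  simp [l12Certificate, hl]

lemma enorm2_curry_l12Certificate_le (hlam : 0 ≤ lam) :
    enorm2 (curry (l12Certificate lam X g) l) ≤ lam := by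
  by_cases hl : enorm2 (curry X l) = 0
  · rw [curry_l12Certificate_of_eq_zero hl, enorm2_smul,
      abs_of_nonneg (clipFactor_nonneg hlam (enorm2_nonneg _))]
    exact clipFactor_mul_le hlam (enorm2_nonneg _)
  · rw [curry_l12Certificate_of_ne_zero hl, enorm2_smul,
      abs_of_nonneg (div_nonneg hlam (enorm2_nonneg _)), div_mul_cancel₀ _ hl]

lemma dotp_l12Certificate_self : dotp (l12Certificate lam X g) X = lam * l12norm X := by
  rw [dotp_eq_sum_dotp_curry, l12norm_eq_sum_enorm2_curry, mul_sum]
  refine sum_congr rfl fun l _ ↦ ?_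
  by_cases hl : enorm2 (curry X l) = 0
  · rw [hl, mul_zero, enorm2_eq_zero.1 hl]
    simp [dotp]
  · rw [curry_l12Certificate_of_ne_zero hl, dotp_smul_left, dotp_self]
    field_simp

end L12Certificate

section ResidualBound

variable {n M : ℕ}

noncomputable def l12ResidualBound (lam : ℝ) (X g : Fin n × Fin M → ℝ) : ℝ :=
  ∑ l ∈ rowSupport X, (2 * enorm2 (curry g l) ^ 2 + 2 * lam ^ 2)
    + ∑ l, 8 * exp (enorm2 (curry g l) ^ 2 / 4 - lam ^ 2 / 8)

lemma enorm2_sub_l12Certificate_sq_le {lam : ℝ} (hlam : 0 ≤ lam) (X g : Fin n × Fin M → ℝ) :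
    enorm2 (g - l12Certificate lam X g) ^ 2 ≤ l12ResidualBound lam X g := by
  set v := l12Certificate lam X g
  have hsupp (l : Fin n) :
      enorm2 (curry (g - v) l) ^ 2 ≤ 2 * enorm2 (curry g l) ^ 2 + 2 * lam ^ 2 := by
    have htri : enorm2 (curry (g - v) l) ≤ enorm2 (curry g l) + enorm2 (curry v l) :=
      enorm2_sub_le _ _
    have hv : enorm2 (curry v l) ≤ lam := enorm2_curry_l12Certificate_le hlam
    have h1 := pow_le_pow_left₀ (enorm2_nonneg _) htri 2
    have h2 := pow_le_pow_left₀ (enorm2_nonneg _) hv 2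
    nlinarith [sq_nonneg (enorm2 (curry g l) - enorm2 (curry v l))]
  have hzero (l : Fin n) (hl : enorm2 (curry X l) = 0) :
      enorm2 (curry (g - v) l) ^ 2 ≤ 8 * exp (enorm2 (curry g l) ^ 2 / 4 - lam ^ 2 / 8) := by
    have hrow : curry (g - v) l = (1 - clipFactor lam (enorm2 (curry g l))) • curry g l := by
      rw [show curry (g - v) l = curry g l - curry v l from rfl,
        curry_l12Certificate_of_eq_zero hl, sub_smul, one_smul]
    rw [hrow, enorm2_smul, abs_of_nonneg (sub_nonneg.2 clipFactor_le_one)]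
    exact sq_one_sub_clipFactor_mul_le hlam (enorm2_nonneg _)
  rw [enorm2_sq_eq_sum_enorm2_curry_sq, l12ResidualBound,
    ← sum_filter_add_sum_filter_not univ fun l ↦ enorm2 (curry X l) ≠ 0]
  refine add_le_add (sum_le_sum fun l _ ↦ hsupp l) ?_
  refine (sum_le_sum fun l hl ↦ hzero l (not_not.1 (mem_filter.1 hl).2)).trans ?_
  exact sum_le_sum_of_subset_of_nonneg (subset_univ _) fun _ _ _ ↦ by positivity

lemma enorm2_curry_sq_eq_sum (g : Fin n × Fin M → ℝ) (l : Fin n) :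
    enorm2 (curry g l) ^ 2 = ∑ p ∈ {l} ×ˢ univ, g p ^ 2 := by
  rw [enorm2_sq, sum_product, sum_singleton]
  rfl

lemma integrable_enorm2_curry_sq (l : Fin n) :
    Integrable (fun g ↦ enorm2 (curry g l) ^ 2) (stdGaussian (Fin n × Fin M)) := by
  simpa only [enorm2_curry_sq_eq_sum] using integrable_sum_sq_stdGaussian _

lemma integral_enorm2_curry_sq (l : Fin n) :
    ∫ g, enorm2 (curry g l) ^ 2 ∂stdGaussian (Fin n × Fin M) = M := by
  simp only [enorm2_curry_sq_eq_sum, integral_sum_sq_stdGaussian, card_product, card_singleton,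
    card_univ, Fintype.card_fin, one_mul]

lemma integrable_exp_enorm2_curry_sq_div_four (l : Fin n) :
    Integrable (fun g ↦ exp (enorm2 (curry g l) ^ 2 / 4)) (stdGaussian (Fin n × Fin M)) := by
  simpa only [enorm2_curry_sq_eq_sum] using integrable_exp_sum_sq_div_four_stdGaussian _

lemma integral_exp_enorm2_curry_sq_div_four (l : Fin n) :
    ∫ g, exp (enorm2 (curry g l) ^ 2 / 4) ∂stdGaussian (Fin n × Fin M) = √2 ^ M := by
  simp only [enorm2_curry_sq_eq_sum, integral_exp_sum_sq_div_four_stdGaussian, card_product,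
    card_singleton, card_univ, Fintype.card_fin, one_mul]

lemma integrable_exp_enorm2_curry_sq_sub (l : Fin n) (c : ℝ) :
    Integrable (fun g ↦ 8 * exp (enorm2 (curry g l) ^ 2 / 4 - c))
      (stdGaussian (Fin n × Fin M)) := by
  simpa only [exp_sub] using ((integrable_exp_enorm2_curry_sq_div_four l).div_const _).const_mul 8

lemma integrable_l12ResidualBound (lam : ℝ) (X : Fin n × Fin M → ℝ) :
    Integrable (fun g ↦ l12ResidualBound lam X g) (stdGaussian (Fin n × Fin M)) :=
  (integrable_finsetSum _ fun l _ ↦ ((integrable_enorm2_curry_sq l).const_mul 2).add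
    (integrable_const _)).add (integrable_finsetSum _ fun l _ ↦
      integrable_exp_enorm2_curry_sq_sub l _)

lemma integral_l12ResidualBound (lam : ℝ) (X : Fin n × Fin M → ℝ) :
    ∫ g, l12ResidualBound lam X g ∂stdGaussian (Fin n × Fin M)
      = #(rowSupport X) * (2 * M + 2 * lam ^ 2) + n * (8 * √2 ^ M / exp (lam ^ 2 / 8)) := by
  have hsupp (l : Fin n) : ∫ g, (2 * enorm2 (curry g l) ^ 2 + 2 * lam ^ 2)
      ∂stdGaussian (Fin n × Fin M) = 2 * M + 2 * lam ^ 2 := by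
    rw [integral_add ((integrable_enorm2_curry_sq l).const_mul 2) (integrable_const _),
      integral_const_mul, integral_enorm2_curry_sq]
    simp
  have hexp (l : Fin n) : ∫ g, 8 * exp (enorm2 (curry g l) ^ 2 / 4 - lam ^ 2 / 8)
      ∂stdGaussian (Fin n × Fin M) = 8 * √2 ^ M / exp (lam ^ 2 / 8) := by
    simp only [exp_sub]
    rw [integral_const_mul, integral_div, integral_exp_enorm2_curry_sq_div_four, mul_div_assoc]
  have hsupp_int (l : Fin n) : Integrable (fun g ↦ 2 * enorm2 (curry g l) ^ 2 + 2 * lam ^ 2)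
      (stdGaussian (Fin n × Fin M)) :=
    ((integrable_enorm2_curry_sq l).const_mul 2).add (integrable_const _)
  simp only [l12ResidualBound]
  rw [integral_add (integrable_finsetSum _ fun l _ ↦ hsupp_int l)
      (integrable_finsetSum _ fun l _ ↦ integrable_exp_enorm2_curry_sq_sub l _),
    integral_finsetSum _ fun l _ ↦ hsupp_int l,
    integral_finsetSum _ fun l _ ↦ integrable_exp_enorm2_curry_sq_sub l _]
  simp only [hsupp, hexp, sum_const, card_univ, Fintype.card_fin, nsmul_eq_mul]

end ResidualBound

section ConicWidth

variable {n M : ℕ}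

lemma l12norm_nonneg (X : Fin n × Fin M → ℝ) : 0 ≤ l12norm X :=
  sum_nonneg fun _ _ ↦ sqrt_nonneg _

lemma conicWidth_l12Ball_sq_le {X : Fin n × Fin M → ℝ} (hX : X ≠ 0) {lam : ℝ} (hlam : 0 ≤ lam) :
    conicWidth {Y | l12norm Y ≤ l12norm X} X ^ 2
      ≤ #(rowSupport X) * (2 * M + 2 * lam ^ 2) + n * (8 * √2 ^ M / exp (lam ^ 2 / 8)) := by
  have hXnorm : enorm2 X ≠ 0 := fun h ↦ hX (enorm2_eq_zero.1 h)
  have hcert (g : Fin n × Fin M → ℝ) :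
      ∀ Y ∈ {Y | l12norm Y ≤ l12norm X}, dotp (l12Certificate lam X g) Y
        ≤ dotp (l12Certificate lam X g) X := fun Y hY ↦ by
    rw [dotp_l12Certificate_self]
    exact (dotp_le_mul_l12norm (fun _ ↦ enorm2_curry_l12Certificate_le hlam) Y).trans
      (mul_le_mul_of_nonneg_left hY hlam)
  have hmem : (enorm2 X)⁻¹ • (0 - X) ∈ coneAt {Y | l12norm Y ≤ l12norm X} X ∩ sphR _ 1 := by
    refine ⟨⟨_, inv_nonneg.2 (enorm2_nonneg X), 0, ?_, rfl⟩, ?_⟩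
    · simpa [l12norm] using l12norm_nonneg X
    · change enorm2 _ = 1
      rw [zero_sub, ← neg_one_smul ℝ X, smul_smul, enorm2_smul, abs_mul, abs_neg, abs_one,
        mul_one, abs_inv, abs_of_nonneg (enorm2_nonneg X), inv_mul_cancel₀ hXnorm]
  rw [← integral_l12ResidualBound]
  refine meanWidth_sq_le hmem
    (fun g ↦ (sq_nonneg _).trans (enorm2_sub_l12Certificate_sq_le hlam X g))
    (integrable_l12ResidualBound lam X) fun g y hy ↦ ?_
  exact (dotp_le_enorm2_sub_of_mem_coneAt (hcert g) hy g).trans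
    (le_sqrt_of_sq_le (enorm2_sub_l12Certificate_sq_le hlam X g))

lemma sqrt_two_pow_le_exp (m : ℕ) : √2 ^ m ≤ exp m := by
  rw [← exp_one_pow]
  refine pow_le_pow_left₀ (sqrt_nonneg 2) ?_ m
  nlinarith [add_one_le_exp 1, sq_sqrt (zero_le_two : (0 : ℝ) ≤ 2), sqrt_nonneg 2]

theorem conicWidth_l12Ball_sq_le_of_card_rowSupport_le {X : Fin n × Fin M → ℝ} (hX : X ≠ 0)
    {s : ℕ} (hs : 1 ≤ s) (hsn : s ≤ n) (hsupp : #(rowSupport X) ≤ s) :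
    conicWidth {Y | l12norm Y ≤ l12norm X} X ^ 2 ≤ 38 * s * max (M : ℝ) (log (2 * n / s)) := by
  set L := log (2 * n / s)
  have hsR : (1 : ℝ) ≤ s := by exact_mod_cast hs
  have hnR : (s : ℝ) ≤ n := by exact_mod_cast hsn
  have hs0 : (0 : ℝ) < s := by linarith
  have hn0 : (0 : ℝ) < n := by linarith
  have hM : (1 : ℝ) ≤ M := by
    rcases Nat.eq_zero_or_pos M with rfl | hM
    · exact absurd (funext fun p ↦ p.2.elim0) hX
    · exact_mod_cast hM
  have hL : 0 ≤ L := log_nonneg (by rw [le_div_iff₀ hs0]; linarith)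
  set lam := √(8 * (L + M))
  have hlam : lam ^ 2 = 8 * (L + M) := sq_sqrt (by positivity)
  have hexp : exp (lam ^ 2 / 8) = 2 * n / s * exp M := by
    rw [hlam, show 8 * (L + M) / 8 = L + M by ring, exp_add, exp_log (by positivity)]
  have hoff : n * (8 * √2 ^ M / exp (lam ^ 2 / 8)) ≤ 4 * s := by
    have hsimp : n * (8 * √2 ^ M / (2 * n / s * exp M)) = 4 * s * (√2 ^ M / exp M) := by
      field_simp
      ring
    rw [hexp, hsimp]
    exact mul_le_of_le_one_right (by positivity) ((div_le_one (exp_pos _)).2 (sqrt_two_pow_le_exp M))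
  have hon : #(rowSupport X) * (2 * M + 2 * lam ^ 2) ≤ s * (18 * M + 16 * L) := by
    rw [hlam]
    have hcard : (#(rowSupport X) : ℝ) ≤ s := by exact_mod_cast hsupp
    nlinarith
  calc conicWidth {Y | l12norm Y ≤ l12norm X} X ^ 2
      ≤ #(rowSupport X) * (2 * M + 2 * lam ^ 2) + n * (8 * √2 ^ M / exp (lam ^ 2 / 8)) :=
        conicWidth_l12Ball_sq_le hX (sqrt_nonneg _)
    _ ≤ s * (18 * M + 16 * L) + 4 * s := add_le_add hon hoff
    _ ≤ 38 * s * max (M : ℝ) L := by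
        nlinarith [le_max_left (M : ℝ) L, le_max_right (M : ℝ) L]

end ConicWidth

lemma card_rowSupport_le_ncard {n M : ℕ} (x0 : Fin n → ℝ) (μ : Fin M → ℝ) :
    #(rowSupport fun p : Fin n × Fin M ↦ x0 p.1 * μ p.2) ≤ {l : Fin n | x0 l ≠ 0}.ncard := by
  rw [← Set.ncard_coe_finset]
  refine Set.ncard_le_ncard fun l hl h0 ↦ (mem_filter.1 hl).2 ?_
  rw [enorm2_eq_zero]
  ext j
  simp [h0]

/-- conic mean width of the ℓ_{1,2}-descent cone at a sparse rank-one matrix. -/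
theorem conic_width_l12_ball :
    ∃ C : ℝ, 0 < C ∧
    ∀ (n M s : ℕ), 1 ≤ s → s ≤ n →
    ∀ x0 : Fin n → ℝ, x0 ≠ 0 → {l : Fin n | x0 l ≠ 0}.ncard ≤ s →
    ∀ μ : Fin M → ℝ, μ ≠ 0 →
    (conicWidth
        {X : Fin n × Fin M → ℝ |
          l12norm X ≤ l12norm (fun p : Fin n × Fin M => x0 p.1 * μ p.2)}
        (fun p : Fin n × Fin M => x0 p.1 * μ p.2)) ^ 2
      ≤ C * s * max (M : ℝ) (Real.log (2 * n / s)) := by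
  refine ⟨38, by norm_num, fun n M s hs hsn x0 hx0 hsupp μ hμ ↦ ?_⟩
  obtain ⟨l, hl⟩ := Function.ne_iff.1 hx0
  obtain ⟨j, hj⟩ := Function.ne_iff.1 hμ
  exact conicWidth_l12Ball_sq_le_of_card_rowSupport_le
    (fun h ↦ mul_ne_zero hl hj (congr_fun h (l, j))) hs hsn
    ((card_rowSupport_le_ncard x0 μ).trans hsupp)
end

section
/- Under the sub-Gaussian measurement model, let W = [w^1 ⋯ w^N] ∈ ℝ^{M×N} satisfy WᵀW = (M/N)·I_N, set A := [a^1 ⋯ a^M], Ã := A·W with columns ã^k = Σ_{j=1}^M w_{j,k}·a^j. Then for every k = 1, …, N: E[(⟨Ã, x_0·μ̃ᵀ⟩_F − y)·ã^k] = −Σ_{j=1}^M w_{j,k}·ρ^j. Consequently, the mismatch covariance of x_0·μ̃ᵀ with respect to (√(N/M)·Ã, √(N/M)·y) equals ρ(x_0·μ̃ᵀ; √(N/M)·Ã, √(N/M)·y) = (N·√N/M)·ρ_Hyb. -/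
open MeasureTheory ProbabilityTheory

/-!
Write `S_j = ⟨a^j, x₀⟩`. Independence and mean zero kill every cross moment `E[g(S_j) a^{j'}]`
with `j ≠ j'`, as well as `E[e a^{j'}]`; isotropy gives `E[S_j a^j] = x₀`, and splitting `a^j`
along `x₀` gives `E[f_j(S_j) a^j] = ρ^j + μ_j x₀`. Since `⟨AW, x₀ μ̃ᵀ⟩_F = Σ_j (Wμ̃)_j S_j`, the
covariance of the residual with `a^{j'}` is `((Wμ̃)_{j'} - μ_{j'}) x₀ - ρ^{j'}`. Mixing these by a
column of `W`, the `x₀`-terms cancel because `WᵀW = (M/N) I` gives `Wᵀ(Wμ̃) = Wᵀμ`. Rescaling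
measurements and output by `√(N/M)` multiplies the covariance by `N/M`.
-/

open Finset

section Algebra

variable {ι d κ : Type*} [Fintype ι] [Fintype d] [Fintype κ]

lemma dotp_const_mul_left (r : ℝ) (u v : ι → ℝ) :
    dotp (fun i => r * u i) v = r * dotp u v := by
  simp only [dotp, mul_sum, mul_assoc]

lemma dotp_combination_outer (A : ι → d → ℝ) (W : ι → κ → ℝ) (x : d → ℝ) (m : κ → ℝ) :
    dotp (fun q : d × κ => ∑ j, W j q.2 * A j q.1) (fun q => x q.1 * m q.2)
      = ∑ j, (∑ k, W j k * m k) * dotp (A j) x := by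
  simp only [dotp, Fintype.sum_prod_type, sum_mul, mul_sum]
  refine (sum_congr rfl fun l _ => sum_comm).trans (sum_comm.trans ?_)
  exact sum_congr rfl fun j _ => sum_congr rfl fun l _ => sum_congr rfl fun k _ => by ring

lemma sum_mul_sum_of_orthogonal [DecidableEq κ] {s : ℝ} {W : ι → κ → ℝ}
    (hW : ∀ k k', ∑ j, W j k * W j k' = if k = k' then s else 0) (v : κ → ℝ) (k : κ) :
    ∑ j, W j k * ∑ k', W j k' * v k' = s * v k := by
  calc ∑ j, W j k * ∑ k', W j k' * v k' = ∑ k', (∑ j, W j k * W j k') * v k' := by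
        simp only [mul_sum, sum_mul, mul_assoc]
        exact sum_comm
    _ = s * v k := by simp [hW, mul_comm]

lemma enorm2_const_mul (c : ℝ) (v : ι → ℝ) : enorm2 (fun i => c * v i) = |c| * enorm2 v := by
  simp only [enorm2, mul_pow, ← mul_sum]
  rw [Real.sqrt_mul (sq_nonneg c), Real.sqrt_sq_eq_abs]

lemma enorm2_neg (v : ι → ℝ) : enorm2 (fun i => -v i) = enorm2 v := by
  simp only [enorm2, neg_sq]

end Algebra

section Moments

variable {Ω : Type*} [MeasurableSpace Ω] {P : Measure Ω}

lemma ProbabilityTheory.IndepFun.integral_comp_mul_comp_eq_zero {α β : Type*} [MeasurableSpace α]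
    [MeasurableSpace β] {X : Ω → α} {Y : Ω → β} (hXY : IndepFun X Y P) (hX : Measurable X)
    (hY : Measurable Y) {φ : α → ℝ} {ψ : β → ℝ} (hφ : Measurable φ) (hψ : Measurable ψ)
    (hψY : ∫ ω, ψ (Y ω) ∂P = 0) :
    ∫ ω, φ (X ω) * ψ (Y ω) ∂P = 0 := by
  rw [hXY.integral_fun_comp_mul_comp hX.aemeasurable hY.aemeasurable
    hφ.aestronglyMeasurable hψ.aestronglyMeasurable, hψY, mul_zero]

lemma ProbabilityTheory.iIndepFun.integral_comp_mul_apply_eq_zero {ι d : Type*}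
    {a : ι → Ω → d → ℝ} (haindep : iIndepFun a P)
    (hameas : ∀ j, Measurable (a j)) (hamean : ∀ j l, ∫ ω, a j ω l ∂P = 0)
    {φ : (d → ℝ) → ℝ} (hφ : Measurable φ) {j j' : ι} (hj : j ≠ j') (l : d) :
    ∫ ω, φ (a j ω) * a j' ω l ∂P = 0 := by
  have hind : IndepFun (a j) (a j') P := haindep.indepFun hj
  exact IndepFun.integral_comp_mul_comp_eq_zero hind (hameas j) (hameas j') hφ
    (measurable_pi_apply l) (hamean j' l)

variable {d : Type*} [Fintype d]

lemma measurable_dotp_const (x : d → ℝ) : Measurable fun v : d → ℝ => dotp v x := by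
  unfold dotp
  fun_prop

lemma integrable_dotp_mul {u : Ω → d → ℝ} {h : Ω → ℝ}
    (hu : ∀ m, Integrable (fun ω => u ω m * h ω) P) (x : d → ℝ) :
    Integrable (fun ω => dotp (u ω) x * h ω) P := by
  simp only [dotp, sum_mul]
  exact integrable_finsetSum _ fun m _ => by
    simpa only [mul_right_comm] using (hu m).mul_const (x m)

lemma Isotropic.integral_dotp_mul_apply [DecidableEq d] {a : Ω → d → ℝ} (ha : Isotropic P a)
    (haa : ∀ k l, Integrable (fun ω => a ω k * a ω l) P) (x : d → ℝ) (l : d) :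
    ∫ ω, dotp (a ω) x * a ω l ∂P = x l := by
  simp only [dotp, sum_mul, mul_right_comm _ (x _)]
  rw [integral_finsetSum _ fun m _ => (haa m l).mul_const (x m)]
  simp [integral_mul_const, ha _ l]

noncomputable def scalingParam (P : Measure Ω) (g : ℝ → ℝ) (a : Ω → d → ℝ) (x : d → ℝ) : ℝ :=
  (∫ ω, g (dotp (a ω) x) * dotp (a ω) x ∂P) / enorm2 x ^ 2

/-- `ρ_l = E[g(⟨a, x⟩) (P_{x^⊥} a)_l]`, the projection written out as `a - ⟨a, x⟩ ‖x‖⁻² x`. -/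
noncomputable def isotropyMismatch (P : Measure Ω) (g : ℝ → ℝ) (a : Ω → d → ℝ) (x : d → ℝ)
    (l : d) : ℝ :=
  ∫ ω, g (dotp (a ω) x) * (a ω l - (dotp (a ω) x / enorm2 x ^ 2) * x l) ∂P

lemma integral_mul_apply_eq_isotropyMismatch_add {g : ℝ → ℝ} {a : Ω → d → ℝ} {x : d → ℝ}
    (hga : ∀ m, Integrable (fun ω => g (dotp (a ω) x) * a ω m) P) (l : d) :
    ∫ ω, g (dotp (a ω) x) * a ω l ∂P
      = isotropyMismatch P g a x l + scalingParam P g a x * x l := by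
  have hgS : Integrable (fun ω => g (dotp (a ω) x) * dotp (a ω) x) P := by
    simp_rw [mul_comm (g _)] at hga ⊢
    exact integrable_dotp_mul hga x
  have hsplit : ∀ ω, g (dotp (a ω) x) * (a ω l - dotp (a ω) x / enorm2 x ^ 2 * x l)
      = g (dotp (a ω) x) * a ω l - x l / enorm2 x ^ 2 * (g (dotp (a ω) x) * dotp (a ω) x) :=
    fun ω => by ring
  simp only [isotropyMismatch, scalingParam, hsplit]
  rw [integral_sub (hga l) (hgS.const_mul _), integral_const_mul]
  ring

lemma integral_const_mul_residual_mul_const_mul (r : ℝ) (A : Ω → d → ℝ) (X : d → ℝ)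
    (y b : Ω → ℝ) :
    ∫ ω, (dotp (fun q => r * A ω q) X - r * y ω) * (r * b ω) ∂P
      = r ^ 2 * ∫ ω, (dotp (A ω) X - y ω) * b ω ∂P := by
  simp only [dotp_const_mul_left]
  rw [← integral_const_mul]
  congr 1 with ω
  ring

end Moments

section MeasurementModel

variable {Ω ι d : Type*} [MeasurableSpace Ω] {P : Measure Ω} [Fintype d]
  {a : ι → Ω → d → ℝ} {e : Ω → ℝ} {f : ι → ℝ → ℝ} {x : d → ℝ}

lemma integral_dotp_mul_apply [DecidableEq ι] [DecidableEq d] (haindep : iIndepFun a P)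
    (hameas : ∀ j, Measurable (a j)) (hamean : ∀ j l, ∫ ω, a j ω l ∂P = 0)
    (haiso : ∀ j, Isotropic P (a j))
    (haa : ∀ j j' k l, Integrable (fun ω => a j ω k * a j' ω l) P) (j j' : ι) (l : d) :
    ∫ ω, dotp (a j ω) x * a j' ω l ∂P = if j = j' then x l else 0 := by
  split_ifs with hj
  · subst hj
    exact (haiso j).integral_dotp_mul_apply (haa j j) x l
  · exact haindep.integral_comp_mul_apply_eq_zero hameas hamean (measurable_dotp_const x) hj l

lemma integral_comp_dotp_mul_apply [DecidableEq ι] (haindep : iIndepFun a P)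
    (hameas : ∀ j, Measurable (a j)) (hamean : ∀ j l, ∫ ω, a j ω l ∂P = 0)
    (hf : ∀ j, Measurable (f j))
    (hfa : ∀ j j' l, Integrable (fun ω => f j (dotp (a j ω) x) * a j' ω l) P) (j j' : ι)
    (l : d) :
    ∫ ω, f j (dotp (a j ω) x) * a j' ω l ∂P
      = if j = j' then isotropyMismatch P (f j) (a j) x l + scalingParam P (f j) (a j) x * x l
        else 0 := by
  split_ifs with hj
  · subst hj
    exact integral_mul_apply_eq_isotropyMismatch_add (hfa j j) l
  · exact haindep.integral_comp_mul_apply_eq_zero hameas hamean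
      ((hf j).comp (measurable_dotp_const x)) hj l

structure IsIndepIsotropicModel [DecidableEq d] (P : Measure Ω) (a : ι → Ω → d → ℝ) (e : Ω → ℝ)
    (f : ι → ℝ → ℝ) (x : d → ℝ) : Prop where
  measurable_a : ∀ j, Measurable (a j)
  measurable_e : Measurable e
  measurable_f : ∀ j, Measurable (f j)
  iIndepFun_a : iIndepFun a P
  indepFun_a_e : IndepFun (fun ω j => a j ω) e P
  integral_a : ∀ j l, ∫ ω, a j ω l ∂P = 0
  isotropic : ∀ j, Isotropic P (a j)
  integrable_a_mul_a : ∀ j j' k l, Integrable (fun ω => a j ω k * a j' ω l) P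
  integrable_e_mul_a : ∀ j l, Integrable (fun ω => e ω * a j ω l) P
  integrable_f_mul_a : ∀ j j' l, Integrable (fun ω => f j (dotp (a j ω) x) * a j' ω l) P

namespace IsIndepIsotropicModel

variable [Fintype ι] [DecidableEq d]

lemma integrable_residual_mul_apply (hm : IsIndepIsotropicModel P a e f x) (c : ι → ℝ) (j' : ι)
    (l : d) :
    Integrable (fun ω => (∑ j, c j * dotp (a j ω) x - (∑ j, f j (dotp (a j ω) x) + e ω))
      * a j' ω l) P := by
  simp only [sub_mul, add_mul, sum_mul, mul_assoc]
  refine .sub (integrable_finsetSum _ fun j _ => .const_mul ?_ _)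
    (.fun_add (integrable_finsetSum _ fun j _ => hm.integrable_f_mul_a j j' l)
      (hm.integrable_e_mul_a j' l))
  exact integrable_dotp_mul (fun m => hm.integrable_a_mul_a j j' m l) x

variable [DecidableEq ι]

lemma integral_residual_mul_apply (hm : IsIndepIsotropicModel P a e f x) (c : ι → ℝ) (j' : ι)
    (l : d) :
    ∫ ω, (∑ j, c j * dotp (a j ω) x - (∑ j, f j (dotp (a j ω) x) + e ω)) * a j' ω l ∂P
      = (c j' - scalingParam P (f j') (a j') x) * x l - isotropyMismatch P (f j') (a j') x l := by
  have hea0 : ∫ ω, e ω * a j' ω l ∂P = 0 :=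
    hm.indepFun_a_e.symm.integral_comp_mul_comp_eq_zero hm.measurable_e
      (measurable_pi_lambda _ hm.measurable_a) (φ := id) (ψ := fun v => v j' l) measurable_id
      ((measurable_pi_apply l).comp (measurable_pi_apply j')) (hm.integral_a j' l)
  have hS : ∀ j, Integrable (fun ω => dotp (a j ω) x * a j' ω l) P :=
    fun j => integrable_dotp_mul (fun m => hm.integrable_a_mul_a j j' m l) x
  have hF : Integrable (fun ω => ∑ j, f j (dotp (a j ω) x) * a j' ω l) P :=
    integrable_finsetSum _ fun j _ => hm.integrable_f_mul_a j j' l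
  simp only [sub_mul, add_mul, sum_mul, mul_assoc]
  rw [integral_sub (integrable_finsetSum _ fun j _ => (hS j).const_mul _)
      (hF.fun_add (hm.integrable_e_mul_a j' l)),
    integral_add hF (hm.integrable_e_mul_a j' l),
    integral_finsetSum _ fun j _ => (hS j).const_mul _,
    integral_finsetSum _ fun j _ => hm.integrable_f_mul_a j j' l]
  simp only [integral_const_mul, hea0,
    integral_dotp_mul_apply hm.iIndepFun_a hm.measurable_a hm.integral_a hm.isotropic
      hm.integrable_a_mul_a,
    integral_comp_dotp_mul_apply hm.iIndepFun_a hm.measurable_a hm.integral_a hm.measurable_f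
      hm.integrable_f_mul_a]
  simp only [mul_ite, mul_zero, sum_ite_eq', mem_univ, ↓reduceIte, add_zero]
  ring

variable {κ : Type*} [Fintype κ] [DecidableEq κ] {W : ι → κ → ℝ} {s t : ℝ}

theorem integral_hybridResidual_mul (hm : IsIndepIsotropicModel P a e f x)
    (hW : ∀ k k', ∑ j, W j k * W j k' = if k = k' then s else 0) (hst : s * t = 1) (k : κ)
    (l : d) :
    ∫ ω, (dotp (fun q : d × κ => ∑ j, W j q.2 * a j ω q.1)
          (fun q => x q.1 * (t * ∑ j, W j q.2 * scalingParam P (f j) (a j) x))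
        - (∑ j, f j (dotp (a j ω) x) + e ω)) * ∑ j, W j k * a j ω l ∂P
      = -∑ j, W j k * isotropyMismatch P (f j) (a j) x l := by
  let c j := ∑ k', W j k' * (t * ∑ j', W j' k' * scalingParam P (f j') (a j') x)
  have hc : ∑ j, W j k * c j = ∑ j, W j k * scalingParam P (f j) (a j) x := by
    rw [sum_mul_sum_of_orthogonal hW, ← mul_assoc, hst, one_mul]
  have hfrob : ∀ ω, dotp (fun q : d × κ => ∑ j, W j q.2 * a j ω q.1)
      (fun q => x q.1 * (t * ∑ j, W j q.2 * scalingParam P (f j) (a j) x))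
        = ∑ j, c j * dotp (a j ω) x :=
    fun ω => dotp_combination_outer (fun j => a j ω) W x
      (fun k => t * ∑ j, W j k * scalingParam P (f j) (a j) x)
  simp only [hfrob]
  simp only [mul_sum, mul_left_comm _ (W _ k)]
  rw [integral_finsetSum _ fun j _ => (hm.integrable_residual_mul_apply c j l).const_mul _]
  simp only [integral_const_mul, hm.integral_residual_mul_apply]
  simp only [mul_sub, ← mul_assoc, sum_sub_distrib, ← sum_mul, hc, sub_self, zero_mul, zero_sub]

theorem enorm2_hybridMismatchCovariance (hm : IsIndepIsotropicModel P a e f x)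
    (hW : ∀ k k', ∑ j, W j k * W j k' = if k = k' then s else 0) (hst : s * t = 1)
    (ht : 0 ≤ t) :
    enorm2 (fun p : d × κ => ∫ ω, (dotp (fun q : d × κ => √t * ∑ j, W j q.2 * a j ω q.1)
          (fun q => x q.1 * (t * ∑ j, W j q.2 * scalingParam P (f j) (a j) x))
        - √t * (∑ j, f j (dotp (a j ω) x) + e ω)) * (√t * ∑ j, W j p.2 * a j ω p.1) ∂P)
      = t * enorm2 (fun p : d × κ => ∑ j, isotropyMismatch P (f j) (a j) x p.1 * W j p.2) := by
  simp only [integral_const_mul_residual_mul_const_mul, Real.sq_sqrt ht,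
    hm.integral_hybridResidual_mul hW hst]
  simp only [enorm2_const_mul, enorm2_neg, abs_of_nonneg ht, mul_comm (W _ _)]

end IsIndepIsotropicModel

end MeasurementModel

/-- mismatch covariance of the hybrid method. -/
theorem hybrid_mismatch_covariance
    (n M N : ℕ) (hM : 0 < M) (hN : 0 < N)
    (Ω : Type) (_ : MeasurableSpace Ω) (P : Measure Ω)
    (x0 : Fin n → ℝ)
    (f : Fin M → ℝ → ℝ) (hf : ∀ j, Measurable (f j))
    (a : Fin M → Ω → (Fin n → ℝ)) (e : Ω → ℝ)
    (hameas : ∀ j, Measurable (a j)) (hemeas : Measurable e)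
    (hamean : ∀ j k, ∫ ω, a j ω k ∂P = 0)
    (haiso : ∀ j, Isotropic P (a j))
    (haindep : iIndepFun a P)
    (haeindep : IndepFun (fun ω j => a j ω) e P)
    -- integrability of all quantities entering the expectations below
    (haaint : ∀ j j' k l, Integrable (fun ω => a j ω k * a j' ω l) P)
    (heaint : ∀ j k, Integrable (fun ω => e ω * a j ω k) P)
    (hfaint : ∀ j j' k, Integrable (fun ω => f j (dotp (a j ω) x0) * a j' ω k) P)
    (W : Fin M → Fin N → ℝ)
    (hW : ∀ k k', ∑ j, W j k * W j k' = if k = k' then (M : ℝ) / N else 0) :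
    -- scaling parameters, hybrid scaling vector, isotropy mismatch vectors
    (fun (μv : Fin M → ℝ) (μt : Fin N → ℝ) (ρvec : Fin M → Fin n → ℝ) =>
      -- first claim: E[(⟨Ã, x0 μ̃ᵀ⟩_F − y)·ã^k] = −∑_j W_{j,k}·ρ^j
      (∀ (k : Fin N) (l : Fin n),
          ∫ ω, (dotp (fun q : Fin n × Fin N => ∑ j, W j q.2 * a j ω q.1)
                  (fun q : Fin n × Fin N => x0 q.1 * μt q.2)
                - (∑ j, f j (dotp (a j ω) x0) + e ω))
              * (∑ j, W j k * a j ω l) ∂P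
            = -∑ j, W j k * ρvec j l) ∧
      -- second claim: the mismatch covariance equals (N√N/M)·ρ_Hyb
      enorm2 (fun p : Fin n × Fin N =>
          ∫ ω, (dotp (fun q : Fin n × Fin N =>
                    Real.sqrt ((N : ℝ) / M) * ∑ j, W j q.2 * a j ω q.1)
                  (fun q : Fin n × Fin N => x0 q.1 * μt q.2)
                - Real.sqrt ((N : ℝ) / M) * (∑ j, f j (dotp (a j ω) x0) + e ω))
              * (Real.sqrt ((N : ℝ) / M) * ∑ j, W j p.2 * a j ω p.1) ∂P)
        = ((N : ℝ) * Real.sqrt N / M) *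
            (Real.sqrt (∑ k : Fin N, ∑ l : Fin n, (∑ j, ρvec j l * W j k) ^ 2)
              / Real.sqrt N))
      (fun j => (∫ ω, f j (dotp (a j ω) x0) * dotp (a j ω) x0 ∂P) / enorm2 x0 ^ 2)
      (fun k => ((N : ℝ) / M) * ∑ j, W j k *
          ((∫ ω, f j (dotp (a j ω) x0) * dotp (a j ω) x0 ∂P) / enorm2 x0 ^ 2))
      (fun j l => ∫ ω, f j (dotp (a j ω) x0) *
          (a j ω l - (dotp (a j ω) x0 / enorm2 x0 ^ 2) * x0 l) ∂P) := by
  have hm : IsIndepIsotropicModel P a e f x0 :=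
    ⟨hameas, hemeas, hf, haindep, haeindep, hamean, haiso, haaint, heaint, hfaint⟩
  have hst : (M : ℝ) / N * (N / M) = 1 := by field_simp
  refine ⟨hm.integral_hybridResidual_mul hW hst,
    (hm.enorm2_hybridMismatchCovariance hW hst (by positivity)).trans ?_⟩
  have hrescale : ∀ Y : ℝ, (N : ℝ) / M * Y = N * √N / M * (Y / √N) := fun Y => by field_simp
  rw [enorm2, Fintype.sum_prod_type_right]
  exact hrescale _
end
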